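/- arXiv:math/9410209 — 5 statements merged into one kernel-verified Lean document; each statement's English description precedes it below -/
import Mathlib

section
/- For 0 < ε < 1 and the perturbations ε(i,j) = ε^{2^{i·δ − j}} with δ ≥ d, the product of ε(i,j) over all index pairs (i,j) strictly preceding (k,l) in the order ≺ is strictly greater than ε(k,l). -/
open Finset

lemma geo_sum (a : ℤ) : ∀ b : ℤ, a - 1 ≤ b →
    ∑ e ∈ Finset.Icc a b, (2:ℝ)^e = 2^(b+1) - 2^a := by
  refine Int.le_induction ?_ ?_
  · rw [Finset.Icc_eq_empty (by omega)]
    simp [show a - 1 + 1 = a by ring]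
  · intro b hb ih
    have hins : Finset.Icc a (b+1) = insert (b+1) (Finset.Icc a b) := by
      ext x; simp only [Finset.mem_Icc, Finset.mem_insert]; omega
    have hnot : (b+1) ∉ Finset.Icc a b := by simp
    rw [hins, Finset.sum_insert hnot, ih]
    have h2 : (2:ℝ) ^ (b+1+1) = 2 ^ (b+1) * 2 := by
      rw [zpow_add_one₀ (by norm_num : (2:ℝ) ≠ 0)]
    rw [h2]; ring

/-- For 0 < ε < 1 and ε(i,j) = ε^(2^(i·δ−j)) with δ ≥ d, the product
of ε(i,j) over all valid index pairs (i,j) strictly preceding (k,l) in the order ≺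
is strictly greater than ε(k,l). -/
theorem stmt1 (n d δ : ℕ) (hn : 1 ≤ n) (hd : 1 ≤ d) (hδ : d ≤ δ)
    (ε : ℝ) (hε0 : 0 < ε) (hε1 : ε < 1)
    (k l : ℕ) (hk : k < n) (hl1 : 1 ≤ l) (hl2 : l ≤ d) :
    ε ^ ((2:ℝ) ^ ((k * δ : ℤ) - (l : ℤ))) <
    ∏ p ∈ (Finset.range n ×ˢ Finset.Icc 1 d).filter
        (fun p => p.1 < k ∨ (p.1 = k ∧ l < p.2)),
      ε ^ ((2:ℝ) ^ ((p.1 * δ : ℤ) - (p.2 : ℤ))) := by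
  set F := (Finset.range n ×ˢ Finset.Icc 1 d).filter
      (fun p => p.1 < k ∨ (p.1 = k ∧ l < p.2)) with hF
  set e : ℕ × ℕ → ℤ := fun p => (p.1 : ℤ) * δ - p.2 with he
  rw [← Real.rpow_sum_of_pos hε0]
  rw [Real.rpow_lt_rpow_left_iff_of_base_lt_one hε0 hε1]
  -- membership facts
  have hmem : ∀ p ∈ F, (p.1 < n ∧ 1 ≤ p.2 ∧ p.2 ≤ d) ∧
      (p.1 < k ∨ (p.1 = k ∧ l < p.2)) := by
    intro p hp
    simp only [hF, Finset.mem_filter, Finset.mem_product, Finset.mem_range,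
      Finset.mem_Icc] at hp
    tauto
  -- injectivity of e on F
  have hinj : Set.InjOn e F := by
    intro p hp q hq hpq
    obtain ⟨⟨_, hp2a, hp2b⟩, _⟩ := hmem p hp
    obtain ⟨⟨_, hq2a, hq2b⟩, _⟩ := hmem q hq
    simp only [he] at hpq
    have hδ' : (d:ℤ) ≤ δ := by exact_mod_cast hδ
    have hp2b' : (p.2:ℤ) ≤ d := by exact_mod_cast hp2b
    have hq2b' : (q.2:ℤ) ≤ d := by exact_mod_cast hq2b
    have hp2a' : (1:ℤ) ≤ p.2 := by exact_mod_cast hp2a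
    have hq2a' : (1:ℤ) ≤ q.2 := by exact_mod_cast hq2a
    have h1 : p.1 = q.1 := by
      rcases lt_trichotomy p.1 q.1 with h | h | h
      · exfalso
        have : ((p.1:ℤ) + 1) * δ ≤ (q.1:ℤ) * δ := by
          apply mul_le_mul_of_nonneg_right _ (by positivity)
          have : (p.1:ℤ) + 1 ≤ q.1 := by exact_mod_cast h
          exact this
        nlinarith
      · exact h
      · exfalso
        have : ((q.1:ℤ) + 1) * δ ≤ (p.1:ℤ) * δ := by
          apply mul_le_mul_of_nonneg_right _ (by positivity)
          have : (q.1:ℤ) + 1 ≤ p.1 := by exact_mod_cast h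
          exact this
        nlinarith
    have h2 : p.2 = q.2 := by
      rw [h1] at hpq
      omega
    exact Prod.ext h1 h2
  -- each exponent lies in Icc (-d) (k*δ - l - 1)
  have hrange : ∀ p ∈ F, e p ∈ Finset.Icc (-(d:ℤ)) ((k:ℤ) * δ - l - 1) := by
    intro p hp
    obtain ⟨⟨_, hp2a, hp2b⟩, hcond⟩ := hmem p hp
    simp only [Finset.mem_Icc, he]
    have hδ' : (d:ℤ) ≤ δ := by exact_mod_cast hδ
    have hp2b' : (p.2:ℤ) ≤ d := by exact_mod_cast hp2b
    have hp2a' : (1:ℤ) ≤ p.2 := by exact_mod_cast hp2a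
    have hl2' : (l:ℤ) ≤ d := by exact_mod_cast hl2
    constructor
    · have : (0:ℤ) ≤ (p.1:ℤ) * δ := by positivity
      linarith
    · rcases hcond with h | ⟨h1, h2⟩
      · have : ((p.1:ℤ) + 1) * δ ≤ (k:ℤ) * δ := by
          apply mul_le_mul_of_nonneg_right _ (by positivity)
          have : (p.1:ℤ) + 1 ≤ k := by exact_mod_cast h
          exact this
        nlinarith
      · have h2' : (l:ℤ) + 1 ≤ p.2 := by exact_mod_cast h2
        rw [h1]
        linarith
  -- bound the sum
  calc ∑ p ∈ F, (2:ℝ) ^ ((p.1 : ℤ) * δ - p.2)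
      = ∑ x ∈ F.image e, (2:ℝ) ^ x := (Finset.sum_image (fun p hp q hq h => hinj hp hq h)).symm
    _ ≤ ∑ x ∈ Finset.Icc (-(d:ℤ)) ((k:ℤ) * δ - l - 1), (2:ℝ) ^ x := by
        apply Finset.sum_le_sum_of_subset_of_nonneg
        · intro x hx
          obtain ⟨p, hp, rfl⟩ := Finset.mem_image.mp hx
          exact hrange p hp
        · intro x _ _
          positivity
    _ = 2 ^ ((k:ℤ) * δ - l - 1 + 1) - 2 ^ (-(d:ℤ)) := by
        apply geo_sum
        have hl2' : (l:ℤ) ≤ d := by exact_mod_cast hl2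
        have : (0:ℤ) ≤ (k:ℤ) * δ := by positivity
        omega
    _ < 2 ^ ((k * δ : ℤ) - (l : ℤ)) := by
        have h1 : (k:ℤ) * δ - l - 1 + 1 = (k * δ : ℤ) - l := by push_cast; ring
        rw [h1]
        have : (0:ℝ) < 2 ^ (-(d:ℤ)) := by positivity
        linarith
end

section
/- Let e₁ and e₂ be two distinct ε-products, i.e., products of factors ε(i,j) = ε^{2^{i·δ − j}} over finite sets I(e₁) ≠ I(e₂) of index pairs, and let c₁, c₂ > 0 be constants. If I(e₁) is smaller than I(e₂) in the lexicographic-by-largest-differing-pair sense, then there exists ε₀ > 0 such that c₁·e₁(ε) > c₂·e₂(ε) for all 0 < ε < ε₀. -/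
/-!
Since `ε(i,j) = ε ^ 2 ^ (i·δ - j)`, an ε-product over `I` is `ε ^ S(I)` with
`S(I) = ∑_{(i,j) ∈ I} 2 ^ (i·δ - j)`. For `1 ≤ j ≤ δ` the map `(i,j) ↦ i·δ - j` turns `≺` into the
order of `ℤ`, so `I₁` being smaller than `I₂` says that the images of `I₁` and `I₂` compare in
colex order, and then `S(I₁) < S(I₂)` because a power of two exceeds the sum of any set of
smaller powers of two. Hence `c₂ ε ^ S(I₂) < c₁ ε ^ S(I₁)` as soon as
`ε ^ (S(I₂) - S(I₁)) < c₁ / c₂`.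
-/

open Finset Colex

section GeomSum

variable {K : Type*} [Field K] [LinearOrder K] [IsStrictOrderedRing K] {b : K}

lemma geomSum_zpow_lt (hb : 2 ≤ b) {s : Finset ℤ} {n : ℤ} (hs : ∀ k ∈ s, k < n) :
    ∑ k ∈ s, b ^ k < b ^ n := by
  induction s using Finset.induction_on_max generalizing n with
  | empty => simpa using zpow_pos (by linarith) n
  | insert a s has ih =>
    have hb0 : (0 : K) < b := by linarith
    have han : a + 1 ≤ n := hs a (mem_insert_self a s)
    calc ∑ k ∈ insert a s, b ^ k = b ^ a + ∑ k ∈ s, b ^ k :=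
          sum_insert fun ha ↦ lt_irrefl a (has a ha)
      _ < b ^ a + b ^ a := by gcongr; exact ih has
      _ ≤ b ^ (a + 1) := by
          rw [zpow_add_one₀ hb0.ne']
          nlinarith [zpow_pos hb0 a]
      _ ≤ b ^ n := zpow_le_zpow_right₀ (by linarith) han

lemma geomSum_zpow_lt_of_toColex_lt (hb : 2 ≤ b) {s t : Finset ℤ}
    (hst : toColex s < toColex t) : ∑ k ∈ s, b ^ k < ∑ k ∈ t, b ^ k := by
  obtain ⟨a, hat, has, ha⟩ := toColex_lt_toColex_iff_exists_forall_lt.1 hst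
  rw [← sum_sdiff_lt_sum_sdiff]
  calc ∑ k ∈ s \ t, b ^ k < b ^ a :=
        geomSum_zpow_lt hb fun k hk ↦ ha k (mem_sdiff.1 hk).1 (mem_sdiff.1 hk).2
    _ ≤ ∑ k ∈ t \ s, b ^ k :=
        single_le_sum (fun k _ ↦ (zpow_pos (by linarith) k).le) (mem_sdiff.2 ⟨hat, has⟩)

end GeomSum

lemma toColex_image_lt_of_forall_lt {α β : Type*} [DecidableEq α] [LinearOrder β]
    {f : α → β} {s t : Finset α} (hf : Set.InjOn f ↑(s ∪ t)) {b : α} (hb : b ∈ t \ s)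
    (hlt : ∀ a ∈ s \ t, f a < f b) : toColex (s.image f) < toColex (t.image f) := by
  obtain ⟨hbt, hbs⟩ := mem_sdiff.1 hb
  refine toColex_lt_toColex_iff_exists_forall_lt.2 ⟨f b, mem_image_of_mem f hbt, ?_, ?_⟩
  · intro h
    obtain ⟨a, has, hab⟩ := mem_image.1 h
    exact hbs (hf (mem_union_left t has) (mem_union_right s hbt) hab ▸ has)
  · simp only [mem_image, forall_exists_index, and_imp]
    rintro _ a has rfl hat
    exact hlt a (mem_sdiff.2 ⟨has, fun h ↦ hat ⟨a, h, rfl⟩⟩)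

lemma exists_pos_forall_mul_rpow_lt {c₁ c₂ a b : ℝ} (hc₁ : 0 < c₁) (hc₂ : 0 < c₂) (hab : a < b) :
    ∃ ε₀ > 0, ∀ ε : ℝ, 0 < ε → ε < ε₀ → c₂ * ε ^ b < c₁ * ε ^ a := by
  have hc : 0 < c₁ / c₂ := div_pos hc₁ hc₂
  have hba : 0 < b - a := sub_pos.2 hab
  refine ⟨(c₁ / c₂) ^ (b - a)⁻¹, by positivity, fun ε hε hεε₀ ↦ ?_⟩
  have hsmall : ε ^ (b - a) < c₁ / c₂ := by
    simpa [← Real.rpow_mul hc.le, inv_mul_cancel₀ hba.ne'] using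
      Real.rpow_lt_rpow hε.le hεε₀ hba
  calc c₂ * ε ^ b = c₂ * ε ^ (b - a) * ε ^ a := by
        rw [mul_assoc, ← Real.rpow_add hε, sub_add_cancel]
    _ < c₂ * (c₁ / c₂) * ε ^ a := by gcongr
    _ = c₁ * ε ^ a := by field_simp

/-- `ε(i,j) = ε ^ 2 ^ log2Exponent δ (i,j)`. -/
def log2Exponent (δ : ℕ) (p : ℕ × ℕ) : ℤ := p.1 * δ - p.2

/-- The order `≺` on index pairs. -/
def Precedes (p q : ℕ × ℕ) : Prop := p.1 < q.1 ∨ (p.1 = q.1 ∧ q.2 < p.2)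

lemma log2Exponent_lt_of_precedes {δ : ℕ} {p q : ℕ × ℕ} (hp : 1 ≤ p.2) (hq : q.2 ≤ δ)
    (hpq : Precedes p q) : log2Exponent δ p < log2Exponent δ q := by
  unfold log2Exponent
  rcases hpq with h | ⟨h, h'⟩
  · have : (p.1 + 1 : ℤ) * δ ≤ q.1 * δ := by gcongr; exact_mod_cast h
    linarith
  · rw [h]; omega

lemma log2Exponent_injOn (δ : ℕ) :
    Set.InjOn (log2Exponent δ) {p | 1 ≤ p.2 ∧ p.2 ≤ δ} := by
  intro p ⟨hp₁, hpδ⟩ q ⟨hq₁, hqδ⟩ hpq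
  have hlt : ∀ {p q : ℕ × ℕ}, 1 ≤ p.2 → q.2 ≤ δ → p.1 < q.1 →
      log2Exponent δ p ≠ log2Exponent δ q :=
    fun hp hq h ↦ (log2Exponent_lt_of_precedes hp hq (Or.inl h)).ne
  obtain h | h | h := lt_trichotomy p.1 q.1
  · exact absurd hpq (hlt hp₁ hqδ h)
  · unfold log2Exponent at hpq
    rw [h] at hpq
    exact Prod.ext h (by omega)
  · exact absurd hpq.symm (hlt hq₁ hpδ h)

theorem stmt2_general (n d δ : ℕ) (hδ : d ≤ δ)
    (c₁ c₂ : ℝ) (hc₁ : 0 < c₁) (hc₂ : 0 < c₂)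
    (I₁ I₂ : Finset (ℕ × ℕ)) (hne : I₁ ≠ I₂)
    (hval : ∀ p ∈ I₁ ∪ I₂, p.1 < n ∧ 1 ≤ p.2 ∧ p.2 ≤ d)
    (prec : ℕ × ℕ → ℕ × ℕ → Prop)
    (hprec : ∀ p q, prec p q ↔ p.1 < q.1 ∨ (p.1 = q.1 ∧ q.2 < p.2))
    (hsmaller :
      (I₁ \ I₂ = ∅) ∨
      (∃ a ∈ I₁ \ I₂, ∃ b ∈ I₂ \ I₁,
        (∀ a' ∈ I₁ \ I₂, a' = a ∨ prec a' a) ∧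
        (∀ b' ∈ I₂ \ I₁, b' = b ∨ prec b' b) ∧ prec a b)) :
    ∃ ε₀ > (0:ℝ), ∀ ε : ℝ, 0 < ε → ε < ε₀ →
      c₂ * ∏ p ∈ I₂, ε ^ ((2:ℝ) ^ ((p.1 * δ : ℤ) - (p.2 : ℤ))) <
      c₁ * ∏ p ∈ I₁, ε ^ ((2:ℝ) ^ ((p.1 * δ : ℤ) - (p.2 : ℤ))) := by
  obtain rfl : prec = Precedes := funext₂ fun p q ↦ propext (hprec p q)
  have hvalid (p) (hp : p ∈ I₁ ∪ I₂) : 1 ≤ p.2 ∧ p.2 ≤ δ :=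
    ⟨(hval p hp).2.1, (hval p hp).2.2.trans hδ⟩
  have hinj : Set.InjOn (log2Exponent δ) ↑(I₁ ∪ I₂) := (log2Exponent_injOn δ).mono hvalid
  obtain ⟨b, hb, hlt⟩ : ∃ b ∈ I₂ \ I₁, ∀ a ∈ I₁ \ I₂, log2Exponent δ a < log2Exponent δ b := by
    rcases hsmaller with hsub | ⟨a, ha, b, hb, ha_max, -, hab⟩
    · obtain ⟨b, hb₂, hb₁⟩ :=
        exists_of_ssubset (ssubset_of_subset_of_ne (sdiff_eq_empty_iff_subset.1 hsub) hne)
      exact ⟨b, mem_sdiff.2 ⟨hb₂, hb₁⟩, by simp [hsub]⟩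
    · refine ⟨b, hb, fun p hp ↦ log2Exponent_lt_of_precedes
        (hvalid p (mem_union_left _ (mem_sdiff.1 hp).1)).1
        (hvalid b (mem_union_right _ (mem_sdiff.1 hb).1)).2 ?_⟩
      rcases ha_max p hp with rfl | hpa
      · exact hab
      · unfold Precedes at hpa hab ⊢; omega
  have hsum : ∑ p ∈ I₁, (2:ℝ) ^ log2Exponent δ p < ∑ p ∈ I₂, (2:ℝ) ^ log2Exponent δ p := by
    have := geomSum_zpow_lt_of_toColex_lt (le_refl (2 : ℝ))
      (toColex_image_lt_of_forall_lt hinj hb hlt)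
    rwa [sum_image (hinj.mono subset_union_left), sum_image (hinj.mono subset_union_right)] at this
  obtain ⟨ε₀, hε₀, hlt_ε⟩ := exists_pos_forall_mul_rpow_lt hc₁ hc₂ hsum
  refine ⟨ε₀, hε₀, fun ε hε hεε₀ ↦ ?_⟩
  simpa only [log2Exponent, ← Real.rpow_sum_of_pos hε] using hlt_ε ε hε hεε₀

/-- if I(e₁) is smaller than I(e₂) in the
lexicographic-by-largest-differing-pair sense, then for positive constants
c₁, c₂ there exists ε₀ > 0 with c₁·e₁(ε) > c₂·e₂(ε) for all 0 < ε < ε₀. -/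
theorem stmt2 (n d δ : ℕ) (hn : 1 ≤ n) (hd : 1 ≤ d) (hδ : d ≤ δ)
    (c₁ c₂ : ℝ) (hc₁ : 0 < c₁) (hc₂ : 0 < c₂)
    (I₁ I₂ : Finset (ℕ × ℕ)) (hne : I₁ ≠ I₂)
    (hval : ∀ p ∈ I₁ ∪ I₂, p.1 < n ∧ 1 ≤ p.2 ∧ p.2 ≤ d)
    (prec : ℕ × ℕ → ℕ × ℕ → Prop)
    (hprec : ∀ p q, prec p q ↔ p.1 < q.1 ∨ (p.1 = q.1 ∧ q.2 < p.2))
    (hsmaller :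
      (I₁ \ I₂ = ∅) ∨
      (∃ a ∈ I₁ \ I₂, ∃ b ∈ I₂ \ I₁,
        (∀ a' ∈ I₁ \ I₂, a' = a ∨ prec a' a) ∧
        (∀ b' ∈ I₂ \ I₁, b' = b ∨ prec b' b) ∧ prec a b)) :
    ∃ ε₀ > (0:ℝ), ∀ ε : ℝ, 0 < ε → ε < ε₀ →
      c₂ * ∏ p ∈ I₂, ε ^ ((2:ℝ) ^ ((p.1 * δ : ℤ) - (p.2 : ℤ))) <
      c₁ * ∏ p ∈ I₁, ε ^ ((2:ℝ) ^ ((p.1 * δ : ℤ) - (p.2 : ℤ))) :=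
  stmt2_general n d δ hδ c₁ c₂ hc₁ hc₂ I₁ I₂ hne hval prec hprec hsmaller
end

section
/- For any real numbers π_{i,j} (0 ≤ i ≤ n−1, 1 ≤ j ≤ d) and any choice of d+1 distinct indices i₀ < i₁ < ⋯ < i_d, there exists ε₀ > 0 such that for all 0 < ε < ε₀ the determinant of the perturbed matrix Λ(ε) (rows (π_{i_ν,1}+ε^{2^{i_ν·δ−1}}, …, π_{i_ν,d}+ε^{2^{i_ν·δ−d}}, 1) with δ ≥ d) is nonzero, i.e., the perturbed points are affinely independent. -/
open Polynomial Finset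

private lemma stmt5_E_inj {d δ : ℕ} (hδ : d ≤ δ) {a b j k : ℕ} (hj : j < d) (hk : k < d)
    (h : a * δ + (d - (j + 1)) = b * δ + (d - (k + 1))) : a = b ∧ j = k := by
  have hδ0 : 0 < δ := by omega
  have key : ∀ x r : ℕ, r < δ → (x * δ + r) / δ = x := by
    intro x r hr
    have hx : x * δ + r = r + δ * x := by ring
    rw [hx, Nat.add_mul_div_left _ _ hδ0, Nat.div_eq_of_lt hr, Nat.zero_add]
  have h1 : d - (j + 1) < δ := by omega
  have h2 : d - (k + 1) < δ := by omega
  have hab : a = b := by rw [← key a _ h1, ← key b _ h2, h]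
  subst hab
  refine ⟨rfl, ?_⟩
  have := Nat.add_left_cancel h
  omega

private lemma stmt5_rpow (t : ℝ) (ht : 0 < t) (d m : ℕ) (z : ℤ) (hm : (m : ℤ) = (d : ℤ) + z) :
    (t ^ (2 ^ d : ℕ)) ^ ((2 : ℝ) ^ z) = t ^ (2 ^ m : ℕ) := by
  rw [← Real.rpow_natCast t (2 ^ d), ← Real.rpow_natCast t (2 ^ m), ← Real.rpow_mul ht.le]
  congr 1
  push_cast
  rw [← zpow_natCast (2 : ℝ) d, ← zpow_natCast (2 : ℝ) m, ← zpow_add₀ (by norm_num : (2:ℝ) ≠ 0)]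
  congr 1
  omega

private lemma stmt5_core {d δ : ℕ} (hδ : d ≤ δ) (idx : Fin (d+1) → ℕ) (hidx : StrictMono idx)
    (σ : Equiv.Perm (Fin (d+1))) (u : Finset (Fin (d+1)))
    (hu : u ⊆ Finset.univ.filter (fun i : Fin (d+1) => (i : ℕ) < d))
    (hsum : ∑ i ∈ u, 2 ^ (idx (σ i) * δ + (d - ((i : ℕ) + 1)))
          = ∑ i ∈ Finset.univ.filter (fun i : Fin (d+1) => (i : ℕ) < d),
              2 ^ (idx i * δ + (d - ((i : ℕ) + 1)))) :
    u = Finset.univ.filter (fun i : Fin (d+1) => (i : ℕ) < d) ∧ ∀ i ∈ u, σ i = i := by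
  classical
  set s0 := Finset.univ.filter (fun i : Fin (d+1) => (i : ℕ) < d) with hs0
  have hmem : ∀ i ∈ s0, (i : ℕ) < d := fun i hi => (Finset.mem_filter.1 hi).2
  have Einj : ∀ {ν μ : Fin (d+1)} {j k : ℕ}, j < d → k < d →
      idx ν * δ + (d - (j + 1)) = idx μ * δ + (d - (k + 1)) → ν = μ ∧ j = k := by
    intro ν μ j k hj hk h
    obtain ⟨h1, h2⟩ := stmt5_E_inj hδ hj hk h
    exact ⟨hidx.injective h1, h2⟩
  have hainj : ∀ x ∈ u, ∀ y ∈ u,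
      idx (σ x) * δ + (d - ((x : ℕ) + 1)) = idx (σ y) * δ + (d - ((y : ℕ) + 1)) → x = y := by
    intro x hx y hy hxy
    obtain ⟨h1, h2⟩ := Einj (hmem x (hu hx)) (hmem y (hu hy)) hxy
    exact Fin.ext h2
  have hbinj : ∀ x ∈ s0, ∀ y ∈ s0,
      idx x * δ + (d - ((x : ℕ) + 1)) = idx y * δ + (d - ((y : ℕ) + 1)) → x = y := by
    intro x hx y hy hxy
    obtain ⟨h1, h2⟩ := Einj (hmem x hx) (hmem y hy) hxy
    exact Fin.ext h2
  have himg : u.image (fun i => idx (σ i) * δ + (d - ((i : ℕ) + 1)))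
      = s0.image (fun i => idx i * δ + (d - ((i : ℕ) + 1))) := by
    apply Finset.geomSum_injective (le_refl 2)
    simp only
    rw [Finset.sum_image hainj, Finset.sum_image hbinj]
    exact hsum
  have hfix : ∀ i ∈ u, σ i = i := by
    intro i hi
    have hmemim : idx (σ i) * δ + (d - ((i : ℕ) + 1))
        ∈ s0.image (fun i => idx i * δ + (d - ((i : ℕ) + 1))) :=
      himg ▸ Finset.mem_image_of_mem _ hi
    obtain ⟨m, hm, hom⟩ := Finset.mem_image.1 hmemim
    obtain ⟨h1, h2⟩ := Einj (hmem m hm) (hmem i (hu hi)) hom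
    exact h1.symm.trans (Fin.ext h2)
  have hsub : s0 ⊆ u := by
    intro m hm
    have hmemim : idx m * δ + (d - ((m : ℕ) + 1))
        ∈ u.image (fun i => idx (σ i) * δ + (d - ((i : ℕ) + 1))) :=
      himg ▸ Finset.mem_image_of_mem _ hm
    obtain ⟨i, hi, hoi⟩ := Finset.mem_image.1 hmemim
    obtain ⟨h1, h2⟩ := Einj (hmem i (hu hi)) (hmem m hm) hoi
    exact Fin.ext h2 ▸ hi
  exact ⟨Finset.Subset.antisymm hu hsub, hfix⟩

private noncomputable def stmt5_pmat (d δ : ℕ) (π' : Fin (d+1) → Fin (d+1) → ℝ) (idx : Fin (d+1) → ℕ) :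
    Matrix (Fin (d+1)) (Fin (d+1)) (Polynomial ℝ) :=
  Matrix.of fun ν j =>
    if (j : ℕ) < d then Polynomial.C (π' ν j) + Polynomial.X ^ (2 ^ (idx ν * δ + (d - ((j : ℕ) + 1))))
    else 1

private lemma stmt5_coeff {d δ : ℕ} (hδ : d ≤ δ)
    (π' : Fin (d+1) → Fin (d+1) → ℝ) (idx : Fin (d+1) → ℕ) (hidx : StrictMono idx) :
    (stmt5_pmat d δ π' idx).det.coeff
      (∑ i ∈ Finset.univ.filter (fun i : Fin (d+1) => (i : ℕ) < d),
        2 ^ (idx i * δ + (d - ((i : ℕ) + 1)))) = 1 := by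
  classical
  set s0 := Finset.univ.filter (fun i : Fin (d+1) => (i : ℕ) < d) with hs0
  set N := ∑ i ∈ s0, 2 ^ (idx i * δ + (d - ((i : ℕ) + 1))) with hN
  rw [Matrix.det_apply', Polynomial.finset_sum_coeff]
  have key : ∀ σ : Equiv.Perm (Fin (d+1)),
      (∏ i, stmt5_pmat d δ π' idx (σ i) i).coeff N = if σ = 1 then 1 else 0 := by
    intro σ
    have h1 : (∏ i, stmt5_pmat d δ π' idx (σ i) i)
        = ∏ i ∈ s0, (Polynomial.C (π' (σ i) i)
            + Polynomial.X ^ (2 ^ (idx (σ i) * δ + (d - ((i : ℕ) + 1))))) := by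
      rw [← Finset.prod_filter_mul_prod_filter_not Finset.univ (fun i : Fin (d+1) => (i : ℕ) < d)]
      have h2 : (∏ i ∈ Finset.univ.filter (fun i : Fin (d+1) => ¬ (i : ℕ) < d),
          stmt5_pmat d δ π' idx (σ i) i) = 1 := by
        refine Finset.prod_eq_one fun i hi => ?_
        simp only [stmt5_pmat, Matrix.of_apply]
        rw [if_neg (Finset.mem_filter.1 hi).2]
      rw [h2, mul_one]
      refine Finset.prod_congr rfl fun i hi => ?_
      simp only [stmt5_pmat, Matrix.of_apply]
      rw [if_pos (Finset.mem_filter.1 hi).2]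
    rw [h1, Finset.prod_add, Polynomial.finset_sum_coeff]
    have hterm : ∀ t ∈ s0.powerset,
        ((∏ i ∈ t, Polynomial.C (π' (σ i) i))
          * ∏ i ∈ s0 \ t, Polynomial.X ^ (2 ^ (idx (σ i) * δ + (d - ((i : ℕ) + 1))))).coeff N
        = (∏ i ∈ t, π' (σ i) i)
          * (if N = ∑ i ∈ s0 \ t, 2 ^ (idx (σ i) * δ + (d - ((i : ℕ) + 1))) then 1 else 0) := by
      intro t ht
      rw [Finset.prod_pow_eq_pow_sum, ← map_prod (Polynomial.C : ℝ →+* Polynomial ℝ) _ t,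
        Polynomial.coeff_C_mul, Polynomial.coeff_X_pow]
    rw [Finset.sum_congr rfl hterm]
    by_cases hσ : σ = 1
    · subst hσ
      rw [if_pos rfl]
      rw [Finset.sum_eq_single (∅ : Finset (Fin (d+1)))]
      · simp [hN]
      · intro t ht htne
        rcases eq_or_ne N (∑ i ∈ s0 \ t, 2 ^ (idx ((1 : Equiv.Perm (Fin (d+1))) i) * δ
            + (d - ((i : ℕ) + 1)))) with hcond | hcond
        · exfalso
          obtain ⟨hueq, _⟩ := stmt5_core hδ idx hidx 1 (s0 \ t)
            (Finset.sdiff_subset) (by rw [← hN]; exact hcond.symm)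
          obtain ⟨x, hx⟩ := Finset.nonempty_iff_ne_empty.2 htne
          have hxs0 : x ∈ s0 := Finset.mem_powerset.1 ht hx
          have hx2 : x ∈ s0 \ t := by rw [hueq]; exact hxs0
          exact (Finset.mem_sdiff.1 hx2).2 hx
        · rw [if_neg hcond, mul_zero]
      · intro habs
        exact absurd (Finset.empty_mem_powerset s0) habs
    · rw [if_neg hσ]
      refine Finset.sum_eq_zero fun t ht => ?_
      rcases eq_or_ne N (∑ i ∈ s0 \ t, 2 ^ (idx (σ i) * δ + (d - ((i : ℕ) + 1)))) with hcond | hcond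
      · exfalso
        obtain ⟨hueq, hfix0⟩ := stmt5_core hδ idx hidx σ (s0 \ t)
          (Finset.sdiff_subset) (by rw [← hN]; exact hcond.symm)
        have hfix : ∀ i ∈ s0, σ i = i := fun i hi => hfix0 i (hueq ▸ hi)
        apply hσ
        apply Equiv.ext
        intro i
        show σ i = i
        by_cases hi : (i : ℕ) < d
        · exact hfix i (Finset.mem_filter.2 ⟨Finset.mem_univ _, hi⟩)
        · by_cases hm : σ.symm i = i
          · calc σ i = σ (σ.symm i) := by rw [hm]
              _ = i := σ.apply_symm_apply i
          · have hlt1 : (σ.symm i : ℕ) < d + 1 := (σ.symm i).isLt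
            have hlt2 : (i : ℕ) < d + 1 := i.isLt
            have hne : (σ.symm i : ℕ) ≠ (i : ℕ) := fun hh => hm (Fin.ext hh)
            have hmlt : (σ.symm i : ℕ) < d := by omega
            have hfx := hfix (σ.symm i) (Finset.mem_filter.2 ⟨Finset.mem_univ _, hmlt⟩)
            rw [σ.apply_symm_apply] at hfx
            exact absurd hfx.symm hm
      · rw [if_neg hcond, mul_zero]
  calc (∑ σ : Equiv.Perm (Fin (d+1)),
        ((((Equiv.Perm.sign σ : ℤˣ) : ℤ) : Polynomial ℝ)
          * ∏ i, stmt5_pmat d δ π' idx (σ i) i).coeff N)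
      = ∑ σ : Equiv.Perm (Fin (d+1)),
          (((Equiv.Perm.sign σ : ℤˣ) : ℤ) : ℝ) * (if σ = 1 then 1 else 0) := by
        refine Finset.sum_congr rfl fun σ _ => ?_
        rw [Polynomial.coeff_intCast_mul, key σ]
    _ = 1 := by
        rw [Finset.sum_eq_single (1 : Equiv.Perm (Fin (d+1)))]
        · simp
        · intro σ _ hσ; simp [hσ]
        · intro habs; exact absurd (Finset.mem_univ _) habs

private lemma stmt5_eval (d δ : ℕ) (π' : Fin (d+1) → Fin (d+1) → ℝ) (idx : Fin (d+1) → ℕ)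
    (t : ℝ) :
    Polynomial.eval t (stmt5_pmat d δ π' idx).det
      = (Matrix.of fun (ν j : Fin (d+1)) =>
          if (j : ℕ) < d then π' ν j + t ^ (2 ^ (idx ν * δ + (d - ((j : ℕ) + 1)))) else 1).det := by
  have h0 : Polynomial.eval t (stmt5_pmat d δ π' idx).det
      = (Polynomial.evalRingHom t) (stmt5_pmat d δ π' idx).det := rfl
  rw [h0, RingHom.map_det]
  congr 1
  ext ν j
  simp only [RingHom.mapMatrix_apply, Matrix.map_apply, stmt5_pmat, Matrix.of_apply]
  split
  · simp
  · simp

/-- for any real array π and d+1 distinct indices i₀ < ⋯ < i_d,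
there is ε₀ > 0 so that for 0 < ε < ε₀ the perturbed determinant is nonzero,
i.e. the perturbed points are affinely independent. -/
theorem stmt5 (n d δ : ℕ) (hd : 1 ≤ d) (hδ : d ≤ δ) (hn : d + 1 ≤ n)
    (π : ℕ → Fin d → ℝ) (idx : Fin (d+1) → ℕ) (hidx : StrictMono idx)
    (hbound : ∀ ν, idx ν < n) :
    ∃ ε₀ > (0:ℝ), ∀ ε : ℝ, 0 < ε → ε < ε₀ →
      (Matrix.of fun (ν : Fin (d+1)) (j : Fin (d+1)) =>
        if h : (j : ℕ) < d then
          π (idx ν) ⟨j, h⟩ + ε ^ ((2:ℝ) ^ ((idx ν * δ : ℤ) - ((j : ℕ) + 1 : ℤ)))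
        else 1).det ≠ 0 := by
  classical
  set π' : Fin (d+1) → Fin (d+1) → ℝ :=
    fun ν j => if h : (j : ℕ) < d then π (idx ν) ⟨j, h⟩ else 0 with hπ'
  set P : Polynomial ℝ := (stmt5_pmat d δ π' idx).det with hP
  have hPne : P ≠ 0 := by
    intro h
    have hc := stmt5_coeff hδ π' idx hidx
    rw [← hP, h] at hc
    simp at hc
  have hroots : {x : ℝ | 0 < x ∧ P.eval x = 0}.Finite := by
    refine (Polynomial.finite_setOf_isRoot hPne).subset fun x hx => hx.2
  obtain ⟨t₀, ht₀pos, ht₀⟩ : ∃ t₀ : ℝ, 0 < t₀ ∧ ∀ t : ℝ, 0 < t → t < t₀ → P.eval t ≠ 0 := by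
    by_cases hne : hroots.toFinset.Nonempty
    · refine ⟨hroots.toFinset.min' hne, ?_, ?_⟩
      · have h := hroots.toFinset.min'_mem hne
        rw [Set.Finite.mem_toFinset] at h
        exact h.1
      · intro t h1 h2 h3
        have htS : t ∈ hroots.toFinset := by rw [Set.Finite.mem_toFinset]; exact ⟨h1, h3⟩
        exact absurd (Finset.min'_le _ t htS) (not_le.2 h2)
    · refine ⟨1, one_pos, ?_⟩
      intro t h1 h2 h3
      exact hne ⟨t, by rw [Set.Finite.mem_toFinset]; exact ⟨h1, h3⟩⟩
  refine ⟨t₀ ^ (2 ^ d : ℕ), pow_pos ht₀pos _, ?_⟩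
  intro ε hε hεlt
  set t : ℝ := ε ^ (((2 : ℝ) ^ d)⁻¹) with htdef
  have htpos : 0 < t := Real.rpow_pos_of_pos hε _
  have htε : t ^ (2 ^ d : ℕ) = ε := by
    rw [htdef, ← Real.rpow_natCast (ε ^ (((2 : ℝ) ^ d)⁻¹)) (2 ^ d), ← Real.rpow_mul hε.le]
    push_cast
    rw [inv_mul_cancel₀ (by positivity : ((2:ℝ) ^ d) ≠ 0), Real.rpow_one]
  have htlt : t < t₀ := by
    by_contra hle
    push_neg at hle
    have hle2 : t₀ ^ (2 ^ d : ℕ) ≤ t ^ (2 ^ d : ℕ) := pow_le_pow_left₀ ht₀pos.le hle _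
    rw [htε] at hle2
    linarith
  have hmat : (Matrix.of fun (ν : Fin (d+1)) (j : Fin (d+1)) =>
        if h : (j : ℕ) < d then
          π (idx ν) ⟨j, h⟩ + ε ^ ((2:ℝ) ^ ((idx ν * δ : ℤ) - ((j : ℕ) + 1 : ℤ)))
        else 1)
      = (Matrix.of fun (ν j : Fin (d+1)) =>
          if (j : ℕ) < d then π' ν j + t ^ (2 ^ (idx ν * δ + (d - ((j : ℕ) + 1)))) else 1) := by
    ext ν j
    simp only [Matrix.of_apply]
    by_cases h : (j : ℕ) < d
    · rw [dif_pos h, if_pos h]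
      have hπ'' : π' ν j = π (idx ν) ⟨j, h⟩ := by rw [hπ']; exact dif_pos h
      rw [hπ'']
      congr 1
      rw [← htε]
      refine stmt5_rpow t htpos d _ _ ?_
      have hjd : (j : ℕ) + 1 ≤ d := h
      push_cast [Nat.cast_sub hjd]
      ring
    · rw [dif_neg h, if_neg h]
  rw [hmat, ← stmt5_eval d δ π' idx t]
  exact ht₀ t htpos htlt
end

section
/- Sign determination terminates: for the perturbed determinant det Δ_D(ε) expanded as a sum of terms (cofactor)·(ε-product) ordered by increasing ε-exponent, the term with ε-product ε((i_D, D), (i_{D−1}, D−1), …, (i₁, 1)) — obtained by taking the ε from every perturbed entry on the anti-diagonal pattern — has coefficient (−1)^{⌊D/2⌋} ≠ 0; hence for sufficiently small ε > 0, sign(det Δ_D(ε)) ∈ {+1, −1}. -/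
open Equiv Finset

variable {D : ℕ}

/-- swap of `i` and `D-1-i`, as a total function. -/
noncomputable def sw (D i : ℕ) : Equiv.Perm (Fin D) :=
  if h : i < D then Equiv.swap ⟨i, h⟩ (Fin.rev ⟨i, h⟩) else 1

lemma revProd (D : ℕ) (k : ℕ) (hk : k ≤ D / 2) :
    ∀ x : Fin D, ((List.range k).map (sw D)).prod x =
    if (x : ℕ) < k ∨ (Fin.rev x : ℕ) < k then Fin.rev x else x := by
  induction k with
  | zero => simp
  | succ k ih =>
    intro x
    have hk' : k ≤ D / 2 := by omega
    rw [List.range_succ, List.map_append, List.prod_append]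
    simp only [List.map_cons, List.map_nil, List.prod_cons, List.prod_nil, mul_one]
    rw [Equiv.Perm.mul_apply]
    have hD : 0 < D := by omega
    have hkD : k < D := by omega
    rw [sw, dif_pos hkD]
    set a : Fin D := ⟨k, hkD⟩ with ha
    have hav : (a : ℕ) = k := rfl
    have hrev : (Fin.rev a : ℕ) = D - 1 - k := by rw [Fin.val_rev]; omega
    by_cases h1 : x = a
    · subst h1
      rw [Equiv.swap_apply_left, ih hk' _]
      have : ¬ ((Fin.rev a : ℕ) < k ∨ (Fin.rev (Fin.rev a) : ℕ) < k) := by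
        rw [Fin.rev_rev]; omega
      rw [if_neg this, if_pos (Or.inl (by omega))]
    · by_cases h2 : x = Fin.rev a
      · subst h2
        rw [Equiv.swap_apply_right, ih hk' _]
        have : ¬ ((a : ℕ) < k ∨ (Fin.rev a : ℕ) < k) := by omega
        rw [if_neg this, if_pos]
        · rw [Fin.rev_rev]
        · right; rw [Fin.rev_rev]; omega
      · rw [Equiv.swap_apply_of_ne_of_ne h1 h2, ih hk' x]
        have hxa : (x : ℕ) ≠ k := fun h => h1 (Fin.ext h)
        have hxr : (Fin.rev x : ℕ) ≠ (Fin.rev a : ℕ) := fun h => h1 (Fin.rev_injective (Fin.ext h))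
        have hxv := x.isLt
        have hrx : (Fin.rev x : ℕ) = D - 1 - x := by rw [Fin.val_rev]; omega
        by_cases hc : (x : ℕ) < k ∨ (Fin.rev x : ℕ) < k
        · rw [if_pos hc, if_pos (by omega)]
        · rw [if_neg hc, if_neg (by omega)]

lemma sign_revPerm' (D : ℕ) :
    Equiv.Perm.sign (Fin.revPerm : Equiv.Perm (Fin D)) = (-1) ^ (D / 2) := by
  have hprod : ((List.range (D / 2)).map (sw D)).prod = Fin.revPerm := by
    ext x
    rw [revProd D (D / 2) le_rfl x]
    have hxv := x.isLt
    have hrx : (Fin.rev x : ℕ) = D - 1 - x := by rw [Fin.val_rev]; omega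
    by_cases hc : (x : ℕ) < D / 2 ∨ (Fin.rev x : ℕ) < D / 2
    · rw [if_pos hc]; simp
    · rw [if_neg hc]
      have : (x : ℕ) = (Fin.rev x : ℕ) := by omega
      simp only [Fin.revPerm_apply]
      exact congrArg _ (Fin.ext this)
  rw [← hprod, Equiv.Perm.sign_prod_list_swap, List.length_map, List.length_range]
  intro g hg
  simp only [List.mem_map, List.mem_range] at hg
  obtain ⟨i, hi, rfl⟩ := hg
  have hiD : i < D := by have := Nat.div_le_self D 2; omega
  rw [sw, dif_pos hiD]
  refine ⟨_, _, ?_, rfl⟩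
  intro h
  have : (⟨i, hiD⟩ : Fin D).val = (Fin.rev ⟨i, hiD⟩ : Fin D).val := congrArg _ h
  rw [Fin.val_rev] at this
  simp at this; omega


open Equiv Finset

/-- exponent of the ε-power in entry (ν,j) -/
def ee (idx : Fin D → ℕ) (δ : ℕ) (ν j : Fin D) : ℤ := (idx ν * δ : ℤ) - ((j : ℕ) + 1)

/-- the weight 2^(ee ν j) -/
noncomputable def ww (idx : Fin D → ℕ) (δ : ℕ) (ν j : Fin D) : ℝ := (2:ℝ) ^ ee idx δ ν j

lemma ww_pos {idx : Fin D → ℕ} {δ : ℕ} (ν j : Fin D) : 0 < ww idx δ ν j :=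
  zpow_pos two_pos _

lemma ee_lt {D δ : ℕ} {idx : Fin D → ℕ} (hidx : StrictMono idx) (hδ : D ≤ δ)
    {ν ν' : Fin D} (h : ν < ν') (j j' : Fin D) : ee idx δ ν j < ee idx δ ν' j' := by
  have h1 : idx ν + 1 ≤ idx ν' := hidx h
  have h2 : (idx ν + 1) * δ ≤ idx ν' * δ := Nat.mul_le_mul_right _ h1
  have h3 : ((j' : ℕ) + 1) ≤ δ := by have := j'.isLt; omega
  have h4 : 1 ≤ (j : ℕ) + 1 := by omega
  unfold ee
  push_cast at h2 ⊢
  nlinarith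
  
lemma sum_two_zpow_lt : ∀ (A : Finset ℤ), ∀ K : ℤ, (∀ a ∈ A, a < K) →
    ∑ a ∈ A, (2:ℝ) ^ a < 2 ^ K := by
  intro A
  induction A using Finset.strongInduction with
  | _ A ih =>
    intro K hK
    rcases A.eq_empty_or_nonempty with rfl | hA
    · simpa using zpow_pos (two_pos (α := ℝ)) K
    · obtain ⟨m, hm, hmax⟩ := A.exists_max_image id hA
      have hsub : A.erase m ⊂ A := Finset.erase_ssubset hm
      have h1 : ∑ a ∈ A.erase m, (2:ℝ) ^ a < 2 ^ m := by
        refine ih _ hsub m ?_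
        intro a ha
        have := hmax a (Finset.mem_of_mem_erase ha)
        have := Finset.ne_of_mem_erase ha
        simp only [id] at *; omega
      rw [← Finset.add_sum_erase _ _ hm]
      have h2 : (2:ℝ) ^ m + 2 ^ m = 2 ^ (m + 1) := by
        rw [zpow_add₀ (two_ne_zero), zpow_one]; ring
      have h3 : (2:ℝ) ^ (m + 1) ≤ 2 ^ K :=
        zpow_le_zpow_right₀ one_le_two (by have := hK m hm; omega)
      linarith

/-- the top exponent sum -/
noncomputable def Etop {D : ℕ} (idx : Fin D → ℕ) (δ : ℕ) : ℝ :=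
  ∑ ν : Fin D, ww idx δ ν (Fin.rev ν)

lemma key_lt {D δ : ℕ} {idx : Fin D → ℕ} (hidx : StrictMono idx) (hδ : D ≤ δ) (σ : Equiv.Perm (Fin D))
    (S : Finset (Fin D)) (h : ¬(σ = Fin.revPerm ∧ S = Finset.univ)) :
    ∑ ν ∈ S, ww idx δ ν (σ ν) < Etop idx δ := by
  classical
  by_cases hσ : σ = Fin.revPerm
  · subst hσ
    have hS : S ≠ Finset.univ := fun hS => h ⟨rfl, hS⟩
    obtain ⟨ν₀, _, hν₀⟩ := Finset.exists_of_ssubset (Finset.ssubset_univ_iff.mpr hS)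
    exact Finset.sum_lt_sum_of_subset (Finset.subset_univ S) (Finset.mem_univ ν₀) hν₀
      (ww_pos _ _) (fun j _ _ => (ww_pos _ _).le)
  · -- σ ≠ rev; find the maximal disagreement m
    have hT : (Finset.univ.filter (fun ν => σ ν ≠ Fin.rev ν)).Nonempty := by
      rw [Finset.filter_nonempty_iff]
      by_contra hc
      push_neg at hc
      exact hσ (Equiv.ext fun ν => hc ν (Finset.mem_univ ν))
    set T := Finset.univ.filter (fun ν => σ ν ≠ Fin.rev ν) with hTdef
    set m := T.max' hT with hmdef
    have hmT : σ m ≠ Fin.rev m := (Finset.mem_filter.mp (T.max'_mem hT)).2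
    have hgt : ∀ ν : Fin D, m < ν → σ ν = Fin.rev ν := by
      intro ν hν
      by_contra hc
      have : ν ∈ T := by rw [hTdef, Finset.mem_filter]; exact ⟨Finset.mem_univ _, hc⟩
      exact absurd (T.le_max' ν this) (not_le.mpr hν)
    -- σ m > rev m
    have hσm : (Fin.rev m : ℕ) < (σ m : ℕ) := by
      rcases lt_trichotomy ((σ m : ℕ)) ((Fin.rev m : ℕ)) with hlt | heq | hgt'
      · exfalso
        have hν : m < Fin.rev (σ m) := by
          have e1 : (Fin.rev (σ m) : ℕ) = D - ((σ m : ℕ) + 1) := Fin.val_rev _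
          have e2 : (Fin.rev m : ℕ) = D - ((m : ℕ) + 1) := Fin.val_rev _
          rw [Fin.lt_iff_val_lt_val, e1]
          have := m.isLt; have := (σ m).isLt; omega
        have := hgt _ hν
        rw [Fin.rev_rev] at this
        have := σ.injective this
        exact absurd (this ▸ hν) (lt_irrefl _)
      · exact absurd (Fin.ext heq) hmT
      · exact hgt'
    -- split S
    rw [← Finset.sum_filter_add_sum_filter_not S (fun ν => m < ν)]
    have hb1 : ∑ ν ∈ S.filter (fun ν => m < ν), ww idx δ ν (σ ν)
        ≤ ∑ ν ∈ Finset.univ.filter (fun ν => m < ν), ww idx δ ν (Fin.rev ν) := by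
      rw [Finset.sum_congr rfl (fun ν hν => by
        rw [hgt ν (Finset.mem_filter.mp hν).2])]
      exact Finset.sum_le_sum_of_subset_of_nonneg
        (Finset.filter_subset_filter _ (Finset.subset_univ S))
        (fun ν _ _ => (ww_pos _ _).le)
    have hb2 : ∑ ν ∈ S.filter (fun ν => ¬ m < ν), ww idx δ ν (σ ν)
        < ww idx δ m (Fin.rev m) := by
      set T' := S.filter (fun ν => ¬ m < ν) with hT'
      have hmono : ∀ ν ∈ T', ∀ ν' ∈ T', ν < ν' →
          ee idx δ ν (σ ν) < ee idx δ ν' (σ ν') := fun ν _ ν' _ hlt =>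
        ee_lt hidx hδ hlt _ _
      have hinj : Set.InjOn (fun ν => ee idx δ ν (σ ν)) T' := by
        intro a ha b hb hab
        rcases lt_trichotomy a b with hlt | heq | hgt'
        · exact absurd hab (ne_of_lt (hmono a ha b hb hlt))
        · exact heq
        · exact absurd hab.symm (ne_of_lt (hmono b hb a ha hgt'))
      have hKbound : ∀ ν ∈ T', ee idx δ ν (σ ν) < ee idx δ m (Fin.rev m) := by
        intro ν hν
        rw [hT', Finset.mem_filter] at hν
        rcases lt_or_eq_of_le (not_lt.mp hν.2) with hlt | heq
        · exact ee_lt hidx hδ hlt _ _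
        · rw [heq]
          unfold ee
          have : ((Fin.rev m : ℕ) : ℤ) < ((σ m : ℕ) : ℤ) := by exact_mod_cast hσm
          omega
      calc ∑ ν ∈ T', ww idx δ ν (σ ν)
          = ∑ a ∈ T'.image (fun ν => ee idx δ ν (σ ν)), (2:ℝ) ^ a := by
            rw [Finset.sum_image (fun a ha b hb hab => hinj ha hb hab)]
            rfl
        _ < 2 ^ ee idx δ m (Fin.rev m) := by
            refine sum_two_zpow_lt _ _ ?_
            intro a ha
            obtain ⟨ν, hν, rfl⟩ := Finset.mem_image.mp ha
            exact hKbound ν hν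
        _ = ww idx δ m (Fin.rev m) := rfl
    have hb3 : ∑ ν ∈ Finset.univ.filter (fun ν => m < ν), ww idx δ ν (Fin.rev ν)
        + ww idx δ m (Fin.rev m) ≤ Etop idx δ := by
      have hmem : m ∉ Finset.univ.filter (fun ν => m < ν) := by
        simp
      calc ∑ ν ∈ Finset.univ.filter (fun ν => m < ν), ww idx δ ν (Fin.rev ν)
            + ww idx δ m (Fin.rev m)
          = ∑ ν ∈ insert m (Finset.univ.filter (fun ν => m < ν)),
              ww idx δ ν (Fin.rev ν) := by rw [Finset.sum_insert hmem, add_comm]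
        _ ≤ Etop idx δ := Finset.sum_le_sum_of_subset_of_nonneg (Finset.subset_univ _)
            (fun ν _ _ => (ww_pos _ _).le)
    linarith

lemma key_eq : ∑ ν : Fin D, ww idx δ ν (Fin.revPerm ν) = Etop idx δ := rfl



open Equiv Finset Filter Matrix

noncomputable def cc {D : ℕ} (π : Fin D → Fin D → ℝ) (σ : Equiv.Perm (Fin D))
    (S : Finset (Fin D)) : ℝ :=
  ((Equiv.Perm.sign σ : ℤ) : ℝ) * ∏ ν ∈ Finset.univ \ S, π ν (σ ν)

noncomputable def KK {D : ℕ} (idx : Fin D → ℕ) (δ : ℕ) (σ : Equiv.Perm (Fin D))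
    (S : Finset (Fin D)) : ℝ :=
  ∑ ν ∈ S, (2:ℝ) ^ ((idx ν * δ : ℤ) - (((σ ν : ℕ) : ℤ) + 1))

lemma det_expand {D δ : ℕ} (idx : Fin D → ℕ) (π : Fin D → Fin D → ℝ) {ε : ℝ}
    (hε : 0 < ε) :
    (Matrix.of fun ν j : Fin D => π ν j +
        ε ^ ((2:ℝ) ^ ((idx ν * δ : ℤ) - ((j : ℕ) + 1 : ℤ)))).det
      = ∑ σ : Equiv.Perm (Fin D), ∑ S : Finset (Fin D),
          cc π σ S * ε ^ KK idx δ σ S := by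
  rw [← Matrix.det_transpose, Matrix.det_apply']
  refine Finset.sum_congr rfl fun σ _ => ?_
  have hentry : ∀ i : Fin D, (Matrix.of fun ν j : Fin D => π ν j +
      ε ^ ((2:ℝ) ^ ((idx ν * δ : ℤ) - ((j : ℕ) + 1 : ℤ))))ᵀ (σ i) i
      = ε ^ ((2:ℝ) ^ ((idx i * δ : ℤ) - (((σ i : ℕ) : ℤ) + 1))) + π i (σ i) := by
    intro i; simp [Matrix.transpose_apply, add_comm]
  rw [Finset.prod_congr rfl fun i _ => hentry i, Finset.prod_add, Finset.mul_sum,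
    ← Finset.powerset_univ]
  refine Finset.sum_congr rfl fun S _ => ?_
  rw [← Real.rpow_sum_of_pos hε]
  unfold cc KK
  ring

lemma KK_eq_ww {D δ : ℕ} (idx : Fin D → ℕ) (σ : Equiv.Perm (Fin D))
    (S : Finset (Fin D)) : KK idx δ σ S = ∑ ν ∈ S, ww idx δ ν (σ ν) := rfl



/-- the term of det Δ_D(ε) with ε-product taken from the whole
antidiagonal pattern has coefficient (−1)^⌊D/2⌋ ≠ 0 (it dominates as ε → ∞);
hence for sufficiently small ε > 0, sign(det Δ_D(ε)) ∈ {+1, −1}. -/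
theorem stmt11 (D δ : ℕ) (hD : 1 ≤ D) (hδ : D ≤ δ)
    (idx : Fin D → ℕ) (hidx : StrictMono idx) (π : Fin D → Fin D → ℝ) :
    let Δ : ℝ → Matrix (Fin D) (Fin D) ℝ := fun ε =>
      Matrix.of fun ν j =>
        π ν j + ε ^ ((2:ℝ) ^ ((idx ν * δ : ℤ) - ((j : ℕ) + 1 : ℤ)))
    let E : ℝ := ∑ ν : Fin D, (2:ℝ) ^ ((idx ν * δ : ℤ) - ((D : ℤ) - (ν : ℕ)))
    Filter.Tendsto (fun ε => (Δ ε).det / ε ^ E) Filter.atTop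
      (nhds ((-1:ℝ) ^ (D / 2))) ∧
    ∃ ε₀ > (0:ℝ), ∀ ε : ℝ, 0 < ε → ε < ε₀ →
      Real.sign ((Δ ε).det) = 1 ∨ Real.sign ((Δ ε).det) = -1 := by
  classical
  intro Δ E
  have hΔ : Δ = fun ε => Matrix.of fun ν j : Fin D =>
      π ν j + ε ^ ((2:ℝ) ^ ((idx ν * δ : ℤ) - ((j : ℕ) + 1 : ℤ))) := rfl
  have hE : E = Etop idx δ := by
    show (∑ ν : Fin D, (2:ℝ) ^ ((idx ν * δ : ℤ) - ((D : ℤ) - (ν : ℕ)))) = _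
    unfold Etop ww ee
    refine Finset.sum_congr rfl fun ν _ => ?_
    congr 1
    have h1 : (Fin.rev ν : ℕ) = D - (ν + 1) := Fin.val_rev ν
    have h2 := ν.isLt
    have h3 : ((Fin.rev ν : ℕ) : ℤ) = (D : ℤ) - ((ν : ℕ) : ℤ) - 1 := by
      rw [h1]; push_cast; omega
    rw [h3]; ring
  have hsign : ((Equiv.Perm.sign (Fin.revPerm : Equiv.Perm (Fin D)) : ℤ) : ℝ)
      = (-1:ℝ) ^ (D / 2) := by
    rw [sign_revPerm']; push_cast; ring
  have hcrev : cc π Fin.revPerm Finset.univ = (-1:ℝ) ^ (D / 2) := by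
    unfold cc
    rw [Finset.sdiff_self, Finset.prod_empty, mul_one, hsign]
  have hKrev : KK idx δ Fin.revPerm Finset.univ = Etop idx δ := key_eq
  have hKlt : ∀ (σ : Equiv.Perm (Fin D)) (S : Finset (Fin D)),
      ¬(σ = Fin.revPerm ∧ S = Finset.univ) → KK idx δ σ S < Etop idx δ :=
    fun σ S h => key_lt hidx hδ σ S h
  constructor
  · -- Part 1: limit at infinity
    have hterm : ∀ (σ : Equiv.Perm (Fin D)) (S : Finset (Fin D)),
        Filter.Tendsto (fun ε => cc π σ S * ε ^ (KK idx δ σ S - E)) Filter.atTop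
          (nhds (if σ = Fin.revPerm ∧ S = Finset.univ then (-1:ℝ) ^ (D / 2) else 0)) := by
      intro σ S
      by_cases hp : σ = Fin.revPerm ∧ S = Finset.univ
      · obtain ⟨rfl, rfl⟩ := hp
        rw [if_pos ⟨rfl, rfl⟩]
        have h0 : KK idx δ Fin.revPerm Finset.univ - E = 0 := by
          rw [hKrev, hE, sub_self]
        simp only [h0, Real.rpow_zero, mul_one, hcrev]
        exact tendsto_const_nhds
      · rw [if_neg hp]
        have hlt : 0 < E - KK idx δ σ S := by
          have := hKlt σ S hp; rw [hE]; linarith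
        have ht := (tendsto_rpow_neg_atTop hlt).const_mul (cc π σ S)
        rw [mul_zero] at ht
        refine ht.congr fun ε => ?_
        rw [neg_sub]
    have hlim : Filter.Tendsto (fun ε => ∑ σ : Equiv.Perm (Fin D),
        ∑ S : Finset (Fin D), cc π σ S * ε ^ (KK idx δ σ S - E)) Filter.atTop
        (nhds ((-1:ℝ) ^ (D / 2))) := by
      have h := tendsto_finset_sum (Finset.univ : Finset (Equiv.Perm (Fin D)))
        fun σ _ => tendsto_finset_sum (Finset.univ : Finset (Finset (Fin D)))
          fun S _ => hterm σ S
      have hval : (∑ σ : Equiv.Perm (Fin D), ∑ S : Finset (Fin D),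
          (if σ = Fin.revPerm ∧ S = Finset.univ then ((-1:ℝ)) ^ (D / 2) else 0))
          = (-1:ℝ) ^ (D / 2) := by
        rw [Fintype.sum_eq_single (Fin.revPerm : Equiv.Perm (Fin D))
          (fun σ hσ => Finset.sum_eq_zero fun S _ => if_neg (fun h => hσ h.1))]
        rw [Fintype.sum_eq_single (Finset.univ : Finset (Fin D))
          (fun S hS => if_neg (fun h => hS h.2))]
        rw [if_pos ⟨rfl, rfl⟩]
      convert h using 2
      exact hval.symm
    refine hlim.congr' ?_
    filter_upwards [Filter.eventually_gt_atTop (0:ℝ)] with ε hε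
    rw [hΔ]
    rw [det_expand idx π hε, Finset.sum_div]
    refine (Finset.sum_congr rfl fun σ _ => ?_).symm
    rw [Finset.sum_div]
    refine Finset.sum_congr rfl fun S _ => ?_
    rw [Real.rpow_sub hε, mul_div_assoc]
  · -- Part 2: sign for small ε
    set K' : Equiv.Perm (Fin D) × Finset (Fin D) → ℝ :=
      fun p => KK idx δ p.1 p.2 with hK'
    set 𝒦 : Finset ℝ := Finset.univ.image K' with h𝒦
    set C : ℝ → ℝ := fun k =>
      ∑ p ∈ Finset.univ.filter (fun p => K' p = k), cc π p.1 p.2 with hC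
    have hdet : ∀ ε : ℝ, 0 < ε → (Δ ε).det = ∑ k ∈ 𝒦, C k * ε ^ k := by
      intro ε hε
      rw [hΔ, det_expand idx π hε, ← Fintype.sum_prod_type']
      rw [← Finset.sum_fiberwise_of_maps_to
        (g := K') (t := 𝒦) (fun p _ => Finset.mem_image_of_mem K' (Finset.mem_univ p))]
      refine Finset.sum_congr rfl fun k hk => ?_
      rw [hC, Finset.sum_mul]
      refine Finset.sum_congr rfl fun p hp => ?_
      have : K' p = k := (Finset.mem_filter.mp hp).2
      rw [← this]
    have hfib : Finset.univ.filter (fun p => K' p = Etop idx δ)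
        = {((Fin.revPerm : Equiv.Perm (Fin D)), (Finset.univ : Finset (Fin D)))} := by
      ext p
      simp only [Finset.mem_filter, Finset.mem_univ, true_and, Finset.mem_singleton]
      constructor
      · intro hKp
        by_contra hne
        have hnp : ¬(p.1 = Fin.revPerm ∧ p.2 = Finset.univ) := by
          intro ⟨h1, h2⟩; exact hne (Prod.ext h1 h2)
        exact absurd hKp (ne_of_lt (hKlt p.1 p.2 hnp))
      · rintro rfl; exact hKrev
    have hCE : C (Etop idx δ) = (-1:ℝ) ^ (D / 2) := by
      rw [hC]
      simp only [hfib, Finset.sum_singleton]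
      exact hcrev
    have hCEne : C (Etop idx δ) ≠ 0 := by
      rw [hCE]
      exact pow_ne_zero _ (by norm_num)
    have hEmem : Etop idx δ ∈ 𝒦 := by
      rw [h𝒦]
      refine Finset.mem_image.mpr ⟨(Fin.revPerm, Finset.univ), Finset.mem_univ _, hKrev⟩
    set N : Finset ℝ := 𝒦.filter (fun k => C k ≠ 0) with hN'
    have hN : N.Nonempty := ⟨Etop idx δ, Finset.mem_filter.mpr ⟨hEmem, hCEne⟩⟩
    set k₀ : ℝ := N.min' hN with hk₀
    have hk₀mem := N.min'_mem hN
    have hk₀𝒦 : k₀ ∈ 𝒦 := (Finset.mem_filter.mp hk₀mem).1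
    have hCk₀ : C k₀ ≠ 0 := (Finset.mem_filter.mp hk₀mem).2
    have hterm2 : ∀ k ∈ 𝒦, Filter.Tendsto (fun ε => C k * ε ^ (k - k₀))
        (nhdsWithin 0 (Set.Ioi 0)) (nhds (if k = k₀ then C k₀ else 0)) := by
      intro k hk
      by_cases hkk : k = k₀
      · subst hkk
        rw [if_pos rfl]
        simp only [sub_self, Real.rpow_zero, mul_one]
        exact tendsto_const_nhds
      · rw [if_neg hkk]
        by_cases hCk : C k = 0
        · simp only [hCk, zero_mul]
          exact tendsto_const_nhds
        · have hkN : k ∈ N := Finset.mem_filter.mpr ⟨hk, hCk⟩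
          have hlt : 0 < k - k₀ := by
            have := N.min'_le k hkN
            rcases lt_or_eq_of_le this with h | h
            · linarith
            · exact absurd h.symm hkk
          have hcont : ContinuousAt (fun x : ℝ => x ^ (k - k₀)) 0 :=
            Real.continuousAt_rpow_const 0 _ (Or.inr hlt.le)
          have ht : Filter.Tendsto (fun ε : ℝ => C k * ε ^ (k - k₀))
              (nhdsWithin 0 (Set.Ioi 0)) (nhds (C k * (0:ℝ) ^ (k - k₀))) :=
            (hcont.tendsto.mono_left nhdsWithin_le_nhds).const_mul (C k)
          rw [Real.zero_rpow (ne_of_gt hlt), mul_zero] at ht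
          exact ht
    have htend2 : Filter.Tendsto (fun ε => (Δ ε).det / ε ^ k₀)
        (nhdsWithin 0 (Set.Ioi 0)) (nhds (C k₀)) := by
      have hlim2 : Filter.Tendsto (fun ε => ∑ k ∈ 𝒦, C k * ε ^ (k - k₀))
          (nhdsWithin 0 (Set.Ioi 0)) (nhds (C k₀)) := by
        have h := tendsto_finset_sum 𝒦 fun k hk => hterm2 k hk
        have hval : (∑ k ∈ 𝒦, if k = k₀ then C k₀ else 0) = C k₀ := by
          rw [Finset.sum_ite_eq' 𝒦 k₀ (fun _ => C k₀), if_pos hk₀𝒦]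
        convert h using 2
        exact hval.symm
      refine hlim2.congr' ?_
      filter_upwards [self_mem_nhdsWithin] with ε hε
      have hε' : (0:ℝ) < ε := hε
      rw [hdet ε hε', Finset.sum_div]
      refine (Finset.sum_congr rfl fun k hk => ?_).symm
      rw [Real.rpow_sub hε', mul_div_assoc]
    have hne : ∀ᶠ ε in nhdsWithin 0 (Set.Ioi 0), ((Δ ε).det) ≠ 0 := by
      filter_upwards [htend2.eventually_ne hCk₀] with ε h1
      intro h0
      apply h1
      rw [h0, zero_div]
    obtain ⟨u, hu, hsub⟩ := mem_nhdsGT_iff_exists_Ioo_subset.mp hne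
    refine ⟨u, hu, fun ε hε1 hε2 => ?_⟩
    have hdne : (Δ ε).det ≠ 0 := hsub ⟨hε1, hε2⟩
    rcases lt_trichotomy ((Δ ε).det) 0 with h | h | h
    · exact Or.inr (Real.sign_of_neg h)
    · exact absurd h hdne
    · exact Or.inl (Real.sign_of_pos h)
end

section
/- In the expansion of det Δ_D(ε), an ε-product ε((i₁,j₁), …, (i_k,j_k)) with i₁ < ⋯ < i_k can only appear with maximal significance among ε-products using the same rows and columns if also j₁ < ⋯ < j_k: given any bijection between row indices {i₁,…,i_k} and column indices {j₁,…,j_k}, the sum Σ 2^{i·δ − σ(i)} over the matching is uniquely minimized by the monotone matching that pairs the ι-th smallest row index with the ι-th smallest column index (δ ≥ D). -/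
/-!
Let `m` be the largest index moved by `σ`; then `σ m < m` and `σ` fixes every index above `m`.
Since every column gap is smaller than `δ`, the exponents `r ι δ - c ι` of the monotone matching
are strictly increasing, so the terms of indices below `m` sum to less than the term of index `m`
(a geometric bound). Passing from the identity to `σ` at least doubles the term of index `m` and
leaves the terms above it unchanged, which more than makes up for whatever is lost below `m`.
-/

open Finset

theorem Equiv.Perm.exists_apply_lt_of_ne_one {α : Type*} [Fintype α] [LinearOrder α]
    {σ : Equiv.Perm α} (hσ : σ ≠ 1) : ∃ m, σ m < m ∧ ∀ i, m < i → σ i = i := by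
  classical
  have hne : σ.support.Nonempty :=
    nonempty_iff_ne_empty.2 (mt Equiv.Perm.support_eq_empty_iff.1 hσ)
  set m := σ.support.max' hne
  have hm : m ∈ σ.support := σ.support.max'_mem hne
  refine ⟨m, lt_of_le_of_ne ?_ (Equiv.Perm.mem_support.1 hm), fun i hi => ?_⟩
  · exact σ.support.le_max' _ (Equiv.Perm.apply_mem_support.2 hm)
  · exact Equiv.Perm.notMem_support.1 fun h => (σ.support.le_max' i h).not_gt hi

section

variable {K : Type*} [Field K] [LinearOrder K] [IsStrictOrderedRing K] {b : K}

theorem sum_zpow_lt_zpow_of_strictMono {ι : Type*} [LinearOrder ι] (hb : 2 ≤ b) {a : ι → ℤ}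
    (ha : StrictMono a) (s : Finset ι) {j : ι} (hs : ∀ i ∈ s, i < j) :
    ∑ i ∈ s, b ^ a i < b ^ a j := by
  classical
  have hb0 : 0 < b := by linarith
  induction s using Finset.induction_on_max generalizing j with
  | empty => simpa using zpow_pos hb0 (a j)
  | insert x t hxt ih =>
    have hxj : x < j := hs x (mem_insert_self x t)
    calc ∑ i ∈ insert x t, b ^ a i = b ^ a x + ∑ i ∈ t, b ^ a i :=
          sum_insert fun hx => (hxt x hx).false
      _ < b ^ a x + b ^ a x := by gcongr; exact ih hxt
      _ ≤ b ^ (a x + 1) := by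
          rw [zpow_add_one₀ hb0.ne']; nlinarith [zpow_pos hb0 (a x)]
      _ ≤ b ^ a j := zpow_le_zpow_right₀ (by linarith) (ha hxj)

theorem sum_zpow_sub_lt_sum_zpow_sub_perm {ι : Type*} [Fintype ι] [LinearOrder ι] (hb : 2 ≤ b)
    {R c : ι → ℤ} (hc : StrictMono c) (hRc : StrictMono fun i => R i - c i)
    {σ : Equiv.Perm ι} (hσ : σ ≠ 1) :
    ∑ i, b ^ (R i - c i) < ∑ i, b ^ (R i - c (σ i)) := by
  classical
  obtain ⟨m, hσm, hfix⟩ := Equiv.Perm.exists_apply_lt_of_ne_one hσ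
  set f : ι → K := fun i => b ^ (R i - c i)
  set g : ι → K := fun i => b ^ (R i - c (σ i))
  set tail := univ.filter fun i => ¬ i < m
  have hb1 : 1 ≤ b := by linarith
  have hb0 : 0 < b := by linarith
  have hfg : ∀ i ∈ tail, f i ≤ g i := by
    intro i hi
    have hσi : σ i ≤ i := by
      rcases (not_lt.1 (mem_filter.1 hi).2).eq_or_lt with rfl | h
      · exact hσm.le
      · exact (hfix i h).le
    exact zpow_le_zpow_right₀ hb1 (by have := hc.monotone hσi; omega)
  have hgm : b * f m ≤ g m := by
    calc b * f m = b ^ (R m - c m + 1) := by rw [zpow_add_one₀ hb0.ne', mul_comm]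
      _ ≤ g m := zpow_le_zpow_right₀ hb1 (by have := hc hσm; omega)
  have hhead : ∑ i ∈ univ.filter (· < m), f i < f m :=
    sum_zpow_lt_zpow_of_strictMono hb hRc _ fun i hi => (mem_filter.1 hi).2
  have htail : f m + ∑ i ∈ tail, f i ≤ ∑ i ∈ tail, g i := by
    have hm : m ∈ tail := mem_filter.2 ⟨mem_univ m, lt_irrefl m⟩
    have : g m - f m ≤ ∑ i ∈ tail, (g i - f i) :=
      single_le_sum (fun i hi => sub_nonneg.2 (hfg i hi)) hm
    rw [sum_sub_distrib] at this
    nlinarith [zpow_pos hb0 (R m - c m)]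
  calc ∑ i, f i = ∑ i ∈ univ.filter (· < m), f i + ∑ i ∈ tail, f i :=
        (sum_filter_add_sum_filter_not univ (· < m) f).symm
    _ < f m + ∑ i ∈ tail, f i := by gcongr
    _ ≤ ∑ i ∈ tail, g i := htail
    _ ≤ ∑ i, g i :=
        sum_le_sum_of_subset_of_nonneg (subset_univ _) fun i _ _ => (zpow_pos hb0 _).le

end

theorem strictMono_natCast_mul_sub {ι : Type*} [Preorder ι] {r c : ι → ℕ} {δ : ℕ}
    (hr : StrictMono r) (hc1 : ∀ i, 1 ≤ c i) (hcδ : ∀ i, c i ≤ δ) :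
    StrictMono fun i => (r i * δ : ℤ) - c i := by
  intro i j hij
  have hrij : (r i : ℤ) + 1 ≤ r j := by exact_mod_cast hr hij
  have hci : (1 : ℤ) ≤ c i := by exact_mod_cast hc1 i
  have hcj : (c j : ℤ) ≤ δ := by exact_mod_cast hcδ j
  nlinarith

theorem stmt12_general (D δ k : ℕ) (hδ : D ≤ δ)
    (r : Fin k → ℕ) (hr : StrictMono r)
    (c : Fin k → ℕ) (hc : StrictMono c) (hc1 : ∀ ι, 1 ≤ c ι) (hcD : ∀ ι, c ι ≤ D)
    (σ : Equiv.Perm (Fin k)) (hσ : σ ≠ Equiv.refl (Fin k)) :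
    ∑ ι, (2:ℝ) ^ ((r ι * δ : ℤ) - (c ι : ℤ)) <
    ∑ ι, (2:ℝ) ^ ((r ι * δ : ℤ) - (c (σ ι) : ℤ)) :=
  sum_zpow_sub_lt_sum_zpow_sub_perm le_rfl (Nat.strictMono_cast.comp hc)
    (strictMono_natCast_mul_sub hr hc1 fun ι => (hcD ι).trans hδ) hσ

/-- among all bijections between rows i₁<⋯<i_k and columns
j₁<⋯<j_k, the exponent sum Σ 2^(i·δ − σ(i)) is uniquely minimized by the
monotone matching (δ ≥ D). -/
theorem stmt12 (n D δ k : ℕ) (hδ : D ≤ δ) (hk : 1 ≤ k)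
    (r : Fin k → ℕ) (hr : StrictMono r) (hrn : ∀ ι, r ι < n)
    (c : Fin k → ℕ) (hc : StrictMono c) (hc1 : ∀ ι, 1 ≤ c ι) (hcD : ∀ ι, c ι ≤ D)
    (σ : Equiv.Perm (Fin k)) (hσ : σ ≠ Equiv.refl (Fin k)) :
    ∑ ι, (2:ℝ) ^ ((r ι * δ : ℤ) - (c ι : ℤ)) <
    ∑ ι, (2:ℝ) ^ ((r ι * δ : ℤ) - (c (σ ι) : ℤ)) :=
  stmt12_general D δ k hδ r hr c hc hc1 hcD σ hσ
end
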